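/- arXiv:math/0511273 — 6 statements merged into one kernel-verified Lean document; each statement's English description precedes it below -/
import Mathlib

section
/- Let r ∈ Λ, let b ≥ 0 and ε ∈ (0,1), and set M = sup_{k≥0} max(b·r(k)·(1−ε)/ε − R(k+1), 0). Then: (i) lim_{n→∞} r(n)/R(n+1) = 0; (ii) the set {k ≥ 0 : b·r(k)·(1−ε)/ε − R(k+1) > 0} is finite and M < ∞; (iii) for every k ≥ 0, (1 + b·r(k)/(R(k+1) + M))·(1−ε) ≤ 1. -/
open Filter
open scoped ENNReal

noncomputable section

/-- A sequence `r : ℕ → [1,∞)` is subgeometric: `r 0 = 1`, nondecreasing, and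
`log r(n)/n` is nonincreasing (over `n ≥ 1`) with limit `0`. -/
def Subgeometric (r : ℕ → ℝ) : Prop :=
  r 0 = 1 ∧ (∀ n, 1 ≤ r n) ∧ Monotone r ∧
    (∀ n m : ℕ, 1 ≤ n → n ≤ m → Real.log (r m) / m ≤ Real.log (r n) / n) ∧
    Tendsto (fun n : ℕ => Real.log (r n) / n) atTop (nhds 0)

/-- `R(n) = Σ_{k=0}^{n-1} r(k)`. -/
def Rsum (r : ℕ → ℝ) (n : ℕ) : ℝ := ∑ k ∈ Finset.range n, r k

/-- `M = sup_{k≥0} max(b·r(k)·(1-ε)/ε - R(k+1), 0)`, as an extended nonnegative real. -/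
def Mconst (r : ℕ → ℝ) (b ε : ℝ) : ℝ≥0∞ :=
  ⨆ k : ℕ, ENNReal.ofReal (b * r k * ((1 - ε) / ε) - Rsum r (k + 1))

lemma Rsum_one_le (r : ℕ → ℝ) (hr1 : ∀ n, 1 ≤ r n) (k : ℕ) : 1 ≤ Rsum r (k + 1) := by
  have h0 : r 0 ≤ ∑ i ∈ Finset.range (k + 1), r i :=
    Finset.single_le_sum (f := r) (fun i _ => le_trans zero_le_one (hr1 i))
      (Finset.mem_range.mpr (Nat.succ_pos k))
  have := hr1 0
  simp only [Rsum]
  linarith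

lemma Rsum_lb (r : ℕ → ℝ) (hr1 : ∀ n, 1 ≤ r n) (hmono : Monotone r) (m n : ℕ) (hmn : m ≤ n) :
    ((n + 1 - m : ℕ) : ℝ) * r m ≤ Rsum r (n + 1) := by
  have h1 : ∑ _k ∈ Finset.Ico m (n+1), r m ≤ ∑ k ∈ Finset.Ico m (n+1), r k :=
    Finset.sum_le_sum (fun k hk => hmono (Finset.mem_Ico.mp hk).1)
  have h2 : ∑ k ∈ Finset.Ico m (n+1), r k ≤ ∑ k ∈ Finset.range (n+1), r k := by
    apply Finset.sum_le_sum_of_subset_of_nonneg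
    · intro k hk
      exact Finset.mem_range.mpr (Finset.mem_Ico.mp hk).2
    · intro i _ _; exact le_trans zero_le_one (hr1 i)
  have h3 : ∑ _k ∈ Finset.Ico m (n+1), r m = ((n + 1 - m : ℕ) : ℝ) * r m := by
    rw [Finset.sum_const, Nat.card_Ico, nsmul_eq_mul]
  simp only [Rsum]
  linarith [h1, h2, h3.ge]

/-- Subexponential growth estimate. -/
lemma r_growth (r : ℕ → ℝ) (hr1 : ∀ n, 1 ≤ r n)
    (hdec : ∀ n m : ℕ, 1 ≤ n → n ≤ m → Real.log (r m) / m ≤ Real.log (r n) / n)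
    (m n : ℕ) (hm : 1 ≤ m) (hmn : m ≤ n) :
    r n ≤ r m * Real.exp (((n - m : ℕ) : ℝ) * (Real.log (r m) / m)) := by
  set c := Real.log (r m) / m with hc
  have hn0 : (0 : ℝ) < (n : ℝ) := Nat.cast_pos.mpr (by omega)
  have hm0 : (m : ℝ) ≠ 0 := Nat.cast_ne_zero.mpr (by omega)
  have hdiv : Real.log (r n) / n ≤ c := hdec m n hm hmn
  have hlog : Real.log (r n) ≤ c * n := (div_le_iff₀ hn0).mp hdiv
  have hcast : (n : ℝ) = (m : ℝ) + ((n - m : ℕ) : ℝ) := by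
    have h := Nat.add_sub_cancel' hmn
    exact_mod_cast h.symm
  have hcm : c * m = Real.log (r m) := by
    rw [hc, div_mul_cancel₀ _ hm0]
  have hlog2 : Real.log (r n) ≤ Real.log (r m) + ((n - m : ℕ) : ℝ) * c := by
    rw [hcast] at hlog
    nlinarith [hlog, hcm]
  have hrn : 0 < r n := lt_of_lt_of_le one_pos (hr1 n)
  have hrm : 0 < r m := lt_of_lt_of_le one_pos (hr1 m)
  calc r n = Real.exp (Real.log (r n)) := (Real.exp_log hrn).symm
    _ ≤ Real.exp (Real.log (r m) + ((n - m : ℕ) : ℝ) * c) := Real.exp_le_exp.mpr hlog2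
    _ = r m * Real.exp (((n - m : ℕ) : ℝ) * c) := by
        rw [Real.exp_add, Real.exp_log hrm]

/-- Key: the ratio is eventually ≤ δ. -/
lemma ratio_small (r : ℕ → ℝ) (hr : Subgeometric r) :
    ∀ δ : ℝ, 0 < δ → ∃ N, ∀ n ≥ N, r n / Rsum r (n + 1) ≤ δ := by
  obtain ⟨hr0, hr1, hmono, hdec, hlim⟩ := hr
  intro δ hδ
  obtain ⟨j, hj⟩ : ∃ j : ℕ, 2 / δ ≤ (j : ℝ) := exists_nat_ge _
  have hjpos : (0 : ℝ) < (j : ℝ) + 1 := by positivity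
  have hpos : 0 < Real.log 2 / ((j : ℝ) + 1) := div_pos (Real.log_pos one_lt_two) hjpos
  obtain ⟨N₀, hN₀⟩ := Metric.tendsto_atTop.mp hlim _ hpos
  refine ⟨N₀ + j + 1, fun n hn => ?_⟩
  set m := n - j with hmdef
  have hm1 : 1 ≤ m := by omega
  have hmn : m ≤ n := Nat.sub_le _ _
  have hnm : n - m = j := by omega
  have hmN : N₀ ≤ m := by omega
  have hcm : |Real.log (r m) / m| < Real.log 2 / ((j : ℝ) + 1) := by
    have := hN₀ m hmN
    rwa [Real.dist_eq, sub_zero] at this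
  have hcm' : Real.log (r m) / m ≤ Real.log 2 / ((j : ℝ) + 1) :=
    le_of_lt (lt_of_le_of_lt (le_abs_self _) hcm)
  have hrm : 0 < r m := lt_of_lt_of_le one_pos (hr1 m)
  -- exponent bound
  have hexp : ((n - m : ℕ) : ℝ) * (Real.log (r m) / m) ≤ Real.log 2 := by
    rw [hnm]
    calc (j : ℝ) * (Real.log (r m) / m) ≤ (j : ℝ) * (Real.log 2 / ((j : ℝ) + 1)) := by
          apply mul_le_mul_of_nonneg_left hcm' (Nat.cast_nonneg j)
      _ ≤ Real.log 2 := by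
          rw [mul_div_assoc']
          apply div_le_of_le_mul₀ (le_of_lt hjpos) (le_of_lt (Real.log_pos one_lt_two))
          nlinarith [Real.log_pos one_lt_two, Nat.cast_nonneg (α := ℝ) j]
  have hgrow : r n ≤ r m * 2 := by
    calc r n ≤ r m * Real.exp (((n - m : ℕ) : ℝ) * (Real.log (r m) / m)) :=
          r_growth r hr1 hdec m n hm1 hmn
      _ ≤ r m * 2 := by
          apply mul_le_mul_of_nonneg_left _ (le_of_lt hrm)
          calc Real.exp _ ≤ Real.exp (Real.log 2) := Real.exp_le_exp.mpr hexp
            _ = 2 := Real.exp_log two_pos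
  have hRlb : ((j : ℝ) + 1) * r m ≤ Rsum r (n + 1) := by
    have := Rsum_lb r hr1 hmono m n hmn
    have hcard : ((n + 1 - m : ℕ) : ℝ) = (j : ℝ) + 1 := by
      have : n + 1 - m = j + 1 := by omega
      rw [this]; push_cast; ring
    rwa [hcard] at this
  have hR1 : (1 : ℝ) ≤ Rsum r (n + 1) := Rsum_one_le r hr1 n
  have hRpos : 0 < Rsum r (n + 1) := lt_of_lt_of_le one_pos hR1
  rw [div_le_iff₀ hRpos]
  have h2 : 2 ≤ δ * ((j : ℝ) + 1) := by
    have : 2 / δ ≤ (j : ℝ) + 1 := by linarith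
    calc (2 : ℝ) = δ * (2 / δ) := by field_simp
      _ ≤ δ * ((j : ℝ) + 1) := mul_le_mul_of_nonneg_left this (le_of_lt hδ)
  calc r n ≤ r m * 2 := hgrow
    _ ≤ r m * (δ * ((j : ℝ) + 1)) := mul_le_mul_of_nonneg_left h2 (le_of_lt hrm)
    _ = δ * (((j : ℝ) + 1) * r m) := by ring
    _ ≤ δ * Rsum r (n + 1) := mul_le_mul_of_nonneg_left hRlb (le_of_lt hδ)

/-- for subgeometric `r`, `b ≥ 0` and `ε ∈ (0,1)`:
(i) `r(n)/R(n+1) → 0`; (ii) the set of `k` with `b·r(k)·(1-ε)/ε - R(k+1) > 0` is finite and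
`M < ∞`; (iii) for every `k`, `(1 + b·r(k)/(R(k+1) + M))·(1-ε) ≤ 1`. -/
theorem stmt3 (r : ℕ → ℝ) (hr : Subgeometric r) (b : ℝ) (hb : 0 ≤ b)
    (ε : ℝ) (hε0 : 0 < ε) (hε1 : ε < 1) :
    Tendsto (fun n : ℕ => r n / Rsum r (n + 1)) atTop (nhds 0) ∧
    {k : ℕ | 0 < b * r k * ((1 - ε) / ε) - Rsum r (k + 1)}.Finite ∧
    Mconst r b ε ≠ ⊤ ∧
    (∀ k : ℕ, (1 + b * r k / (Rsum r (k + 1) + (Mconst r b ε).toReal)) * (1 - ε) ≤ 1) := by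
  obtain ⟨hr0, hr1, hmono, hdec, hlim⟩ := hr
  have hr' : Subgeometric r := ⟨hr0, hr1, hmono, hdec, hlim⟩
  have key := ratio_small r hr'
  have hRpos : ∀ k, (0 : ℝ) < Rsum r (k + 1) := fun k =>
    lt_of_lt_of_le one_pos (Rsum_one_le r hr1 k)
  -- (i)
  have part1 : Tendsto (fun n : ℕ => r n / Rsum r (n + 1)) atTop (nhds 0) := by
    rw [Metric.tendsto_atTop]
    intro δ hδ
    obtain ⟨N, hN⟩ := key (δ / 2) (by linarith)
    refine ⟨N, fun n hn => ?_⟩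
    have h1 := hN n hn
    have h2 : 0 ≤ r n / Rsum r (n + 1) :=
      div_nonneg (le_trans zero_le_one (hr1 n)) (le_of_lt (hRpos n))
    rw [Real.dist_eq, sub_zero, abs_of_nonneg h2]
    linarith
  -- set C = b * ((1-ε)/ε)
  set C := b * ((1 - ε) / ε) with hC
  have hC0 : 0 ≤ C := by
    apply mul_nonneg hb
    apply div_nonneg (by linarith) (le_of_lt hε0)
  -- eventually f k ≤ 0
  obtain ⟨N, hN⟩ := key (1 / (C + 1)) (by positivity)
  have hfle : ∀ k ≥ N, b * r k * ((1 - ε) / ε) - Rsum r (k + 1) ≤ 0 := by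
    intro k hk
    have h1 := hN k hk
    have hRp := hRpos k
    have h2 : r k ≤ Rsum r (k + 1) * (1 / (C + 1)) := by
      rw [div_le_iff₀ hRp] at h1; linarith
    have h3 : C * r k ≤ C / (C + 1) * Rsum r (k + 1) := by
      calc C * r k ≤ C * (Rsum r (k + 1) * (1 / (C + 1))) :=
            mul_le_mul_of_nonneg_left h2 hC0
        _ = C / (C + 1) * Rsum r (k + 1) := by field_simp
    have h4 : C / (C + 1) * Rsum r (k + 1) ≤ Rsum r (k + 1) := by
      apply mul_le_of_le_one_left (le_of_lt hRp)
      rw [div_le_one (by positivity)]; linarith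
    have heq : b * r k * ((1 - ε) / ε) = C * r k := by ring
    linarith [h3, h4, heq.le, heq.ge]
  -- (ii) finiteness
  have part2 : {k : ℕ | 0 < b * r k * ((1 - ε) / ε) - Rsum r (k + 1)}.Finite := by
    apply Set.Finite.subset (Set.finite_Iio N)
    intro k hk
    simp only [Set.mem_setOf_eq] at hk
    simp only [Set.mem_Iio]
    by_contra h
    push_neg at h
    linarith [hfle k h]
  -- bound on M
  set B := ∑ k ∈ Finset.range N, |b * r k * ((1 - ε) / ε) - Rsum r (k + 1)| with hB
  have hB0 : 0 ≤ B := Finset.sum_nonneg fun k _ => abs_nonneg _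
  have hMle : Mconst r b ε ≤ ENNReal.ofReal B := by
    apply iSup_le
    intro k
    apply ENNReal.ofReal_le_ofReal
    rcases lt_or_ge k N with hkN | hkN
    · calc b * r k * ((1 - ε) / ε) - Rsum r (k + 1)
          ≤ |b * r k * ((1 - ε) / ε) - Rsum r (k + 1)| := le_abs_self _
        _ ≤ B := Finset.single_le_sum (f := fun k => |b * r k * ((1 - ε) / ε) - Rsum r (k + 1)|)
            (fun i _ => abs_nonneg _) (Finset.mem_range.mpr hkN)
    · linarith [hfle k hkN]
  have part3 : Mconst r b ε ≠ ⊤ :=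
    ne_top_of_le_ne_top ENNReal.ofReal_ne_top hMle
  -- (iii)
  refine ⟨part1, part2, part3, fun k => ?_⟩
  set M := (Mconst r b ε).toReal with hM
  have hM0 : 0 ≤ M := ENNReal.toReal_nonneg
  have hfk : b * r k * ((1 - ε) / ε) - Rsum r (k + 1) ≤ M := by
    rcases le_or_gt (b * r k * ((1 - ε) / ε) - Rsum r (k + 1)) 0 with h | h
    · linarith
    · have h1 : ENNReal.ofReal (b * r k * ((1 - ε) / ε) - Rsum r (k + 1)) ≤ Mconst r b ε :=
        le_iSup (fun k => ENNReal.ofReal (b * r k * ((1 - ε) / ε) - Rsum r (k + 1))) k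
      have h2 := ENNReal.toReal_mono part3 h1
      rwa [ENNReal.toReal_ofReal (le_of_lt h)] at h2
  set D := Rsum r (k + 1) + M with hD
  have hDpos : 0 < D := by have := hRpos k; linarith
  set x := b * r k with hx
  have hx0 : 0 ≤ x := mul_nonneg hb (le_trans zero_le_one (hr1 k))
  have hxD : x * (1 - ε) ≤ D * ε := by
    have h1 : x * ((1 - ε) / ε) ≤ D := by
      have := hfk
      rw [hD]; linarith
    have h2 : x * ((1 - ε) / ε) = x * (1 - ε) / ε := by ring
    rw [h2, div_le_iff₀ hε0] at h1
    linarith [h1]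
  have heq : (1 + x / D) * (1 - ε) = (1 - ε) + x * (1 - ε) / D := by
    rw [add_mul, one_mul, div_mul_eq_mul_div]
  have h3 : x * (1 - ε) / D ≤ ε := (div_le_iff₀ hDpos).mpr (by linarith)
  rw [heq]
  linarith
end
end

section
/- Let K be a Markov kernel on a measurable space (Y,𝒴), let D ∈ 𝒴, and let r: ℕ → [0,∞). Suppose that for every y ∈ Y the chain started at y hits D almost surely, i.e. P_y(σ_D < ∞) = 1. Define v_r(y) = E_y[r(σ_D)]. Then for every y ∈ Y, the identity E_y[Σ_{k=0}^{σ_D} r(k)] = E_y[Σ_{k=0}^{σ_D} v_r(Y_k)] holds in [0,∞]. -/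
open MeasureTheory ProbabilityTheory Filter
open scoped ENNReal ENat

noncomputable section

variable {Y : Type*} [MeasurableSpace Y]

/-- `μ` is the family of laws of the canonical Markov chain with kernel `K`. -/
structure IsMarkovChain (K : Kernel Y Y) (μ : Y → Measure (ℕ → Y)) : Prop where
  isProb : ∀ y, IsProbabilityMeasure (μ y)
  init : ∀ y, (μ y).map (fun ω => ω 0) = Measure.dirac y
  markov : ∀ (y : Y) (n : ℕ) (g : (ℕ → Y) → ℝ≥0∞) (f : Y → ℝ≥0∞),
      Measurable[MeasurableSpace.comap (fun ω (i : Fin (n + 1)) => ω i) inferInstance] g →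
      Measurable f →
      ∫⁻ ω, g ω * f (ω (n + 1)) ∂(μ y) = ∫⁻ ω, g ω * ∫⁻ z, f z ∂(K (ω n)) ∂(μ y)

/-- First hitting time of a set `D` (with `inf ∅ = ⊤`). -/
def hit (D : Set Y) (ω : ℕ → Y) : ℕ∞ :=
  sInf ((fun k : ℕ => (k : ℕ∞)) '' {k | ω k ∈ D})

/-- Evaluation of `r` at an extended natural number (value `0` at `⊤`, irrelevant
here since the hitting time is a.s. finite). -/
def rEval (r : ℕ → ℝ) : ℕ∞ → ℝ≥0∞ :=
  fun m => match m with
  | ⊤ => 0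
  | (k : ℕ) => ENNReal.ofReal (r k)

/-!
On `{σ_D < ∞}` the two sums agree pathwise after reversing the order of summation: for `k ≤ σ_D`
the hitting time of the shifted path is `σ_D ∘ θ_k = σ_D - k`, so
`Σ_{k ≤ σ_D} r(k) = Σ_{k ≤ σ_D} r(σ_D ∘ θ_k)`. The event `{k ≤ σ_D}` only depends on
`Y_0, …, Y_{k-1}`, so the Markov property at time `k` replaces `r(σ_D ∘ θ_k)` by `v_r(Y_k)` in
expectation. Since the Markov property is only assumed one step at a time, it is transported to
the law of the hitting time through the first-step recursion for `P_z(σ_D = j)`.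
-/

abbrev pastSigma (n : ℕ) : MeasurableSpace (ℕ → Y) :=
  MeasurableSpace.comap (fun ω (i : Fin (n + 1)) => ω i) inferInstance

omit [MeasurableSpace Y] in
def shift (k : ℕ) (ω : ℕ → Y) : ℕ → Y := fun n => ω (k + n)

section PathSpace

variable {D : Set Y}

theorem measurable_eval_pastSigma {i n : ℕ} (h : i ≤ n) :
    Measurable[pastSigma n] fun ω : ℕ → Y => ω i :=
  fun _ hs => ⟨_, measurable_pi_apply (⟨i, by omega⟩ : Fin (n + 1)) hs, rfl⟩

theorem pastSigma_mono : Monotone (pastSigma (Y := Y)) := fun _ n h =>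
  (@measurable_pi_lambda _ _ _ (pastSigma n) _ _ fun _ => measurable_eval_pastSigma
    (by omega)).comap_le

theorem pastSigma_le (n : ℕ) : pastSigma n ≤ (inferInstance : MeasurableSpace (ℕ → Y)) :=
  (measurable_pi_lambda _ fun _ => measurable_pi_apply _).comap_le

theorem measurable_shift (k : ℕ) : Measurable (shift (Y := Y) k) :=
  measurable_pi_iff.2 fun _ => measurable_pi_apply _

omit [MeasurableSpace Y] in
theorem shift_zero (ω : ℕ → Y) : shift 0 ω = ω :=
  funext fun n => congrArg ω (zero_add n)

omit [MeasurableSpace Y] in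
theorem shift_shift (k l : ℕ) (ω : ℕ → Y) : shift l (shift k ω) = shift (k + l) ω :=
  funext fun n => congrArg ω (add_assoc k l n).symm

omit [MeasurableSpace Y] in
theorem natCast_le_hit_iff {ω : ℕ → Y} {n : ℕ} :
    (n : ℕ∞) ≤ hit D ω ↔ ∀ i < n, ω i ∉ D := by
  simp only [hit, le_sInf_iff, Set.forall_mem_image, Set.mem_ofPred_eq, Nat.cast_le]
  exact ⟨fun h i hi hiD => (h hiD).not_gt hi, fun h i hiD => not_lt.1 fun hi => h i hi hiD⟩

omit [MeasurableSpace Y] in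
theorem hit_eq_zero_iff {ω : ℕ → Y} : hit D ω = 0 ↔ ω 0 ∈ D := by
  rw [← Order.lt_one_iff, ← not_le, ← Nat.cast_one, natCast_le_hit_iff]
  simp

omit [MeasurableSpace Y] in
theorem hit_shift {ω : ℕ → Y} {k : ℕ} (h : (k : ℕ∞) ≤ hit D ω) :
    hit D (shift k ω) = hit D ω - k := by
  refine ENat.eq_of_forall_natCast_le_iff fun n => ?_
  rw [(ENat.addLECancellable_natCast k).le_tsub_iff_right h, ← Nat.cast_add, natCast_le_hit_iff,
    natCast_le_hit_iff]
  rw [natCast_le_hit_iff] at h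
  refine ⟨fun hn i hi => ?_, fun hn i hi => hn (k + i) (by omega)⟩
  by_cases hik : i < k
  · exact h i hik
  · simpa [shift, show k + (i - k) = i by omega] using hn (i - k) (by omega)

omit [MeasurableSpace Y] in
theorem hit_eq_add_one_iff {ω : ℕ → Y} {j : ℕ} :
    hit D ω = ↑(j + 1) ↔ ω 0 ∉ D ∧ hit D (shift 1 ω) = j := by
  by_cases h0 : ω 0 ∈ D
  · refine iff_of_false (fun h => ?_) fun h => h.1 h0
    rw [hit_eq_zero_iff.2 h0] at h
    exact_mod_cast h
  have h1 : ((1 : ℕ) : ℕ∞) ≤ hit D ω := natCast_le_hit_iff.2 fun i hi => by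
    rwa [Nat.lt_one_iff.1 hi]
  rw [hit_shift h1, (ENat.addLECancellable_natCast 1).tsub_eq_iff_eq_add_of_le h1]
  simp [h0]

theorem measurableSet_natCast_le_hit (hD : MeasurableSet D) (n : ℕ) :
    MeasurableSet[pastSigma n] {ω | (n : ℕ∞) ≤ hit D ω} := by
  simp only [natCast_le_hit_iff, Set.ofPred_forall]
  exact .iInter fun i => .iInter fun hi =>
    measurable_eval_pastSigma hi.le hD.compl

theorem measurable_hit (hD : MeasurableSet D) : Measurable (hit D) := by
  have hle (n : ℕ) : MeasurableSet {ω | (n : ℕ∞) ≤ hit D ω} :=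
    pastSigma_le n _ (measurableSet_natCast_le_hit hD n)
  refine measurable_to_countable' fun m => ?_
  induction m using ENat.recTopCoe with
  | top =>
    convert MeasurableSet.iInter hle
    ext ω
    simp [ENat.eq_top_iff_forall_ge]
  | coe n =>
    convert (hle n).diff (hle (n + 1))
    ext ω
    simp only [Set.mem_preimage, Set.mem_singleton_iff, Set.mem_sdiff, Set.mem_ofPred_eq,
      Nat.cast_add, Nat.cast_one, ENat.add_one_le_iff (ENat.natCast_ne_top n), not_lt]
    exact le_antisymm_iff.trans and_comm

end PathSpace

@[simp]
theorem rEval_top (r : ℕ → ℝ) : rEval r ⊤ = 0 := rfl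

@[simp]
theorem rEval_natCast (r : ℕ → ℝ) (n : ℕ) : rEval r n = ENNReal.ofReal (r n) := rfl

theorem rEval_eq_tsum (r : ℕ → ℝ) (m : ℕ∞) :
    rEval r m = ∑' j : ℕ, ENNReal.ofReal (r j) * if m = j then 1 else 0 := by
  induction m using ENat.recTopCoe with
  | top => simp
  | coe n => rw [tsum_eq_single n fun j hj => by simp [Ne.symm hj]]; simp

theorem tsum_ite_natCast_le (N : ℕ) (f : ℕ → ℝ≥0∞) :
    ∑' k : ℕ, (if (k : ℕ∞) ≤ N then f k else 0) = ∑ k ∈ Finset.range (N + 1), f k := by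
  rw [tsum_eq_sum (s := Finset.range (N + 1)) fun k hk =>
    if_neg (by simpa [Nat.lt_succ_iff] using hk)]
  exact Finset.sum_congr rfl fun k hk => if_pos (by simpa [Nat.lt_succ_iff] using hk)

omit [MeasurableSpace Y] in
theorem tsum_ite_le_hit_eq_rEval_shift {D : Set Y} (r : ℕ → ℝ) {ω : ℕ → Y}
    (hω : hit D ω < ⊤) :
    ∑' k : ℕ, (if (k : ℕ∞) ≤ hit D ω then ENNReal.ofReal (r k) else 0) =
      ∑' k : ℕ, (if (k : ℕ∞) ≤ hit D ω then rEval r (hit D (shift k ω)) else 0) := by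
  obtain ⟨N, hN⟩ := ENat.ne_top_iff_exists.1 hω.ne
  have hshift {k : ℕ} (hk : k ≤ N) :
      rEval r (hit D (shift k ω)) = ENNReal.ofReal (r (N - k)) := by
    rw [hit_shift (hN ▸ Nat.cast_le.2 hk), ← hN, ← ENat.natCast_sub, rEval_natCast]
  rw [← hN, tsum_ite_natCast_le, tsum_ite_natCast_le,
    ← Finset.sum_range_reflect (fun k => ENNReal.ofReal (r k))]
  refine Finset.sum_congr rfl fun k hk => ?_
  rw [hshift (by simpa [Nat.lt_succ_iff] using hk), Nat.add_sub_cancel]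

/-- `hitProb K D j z` is `P_z(σ_D = j)`, by first-step analysis. -/
def hitProb (K : Kernel Y Y) (D : Set Y) : ℕ → Y → ℝ≥0∞
  | 0 => D.indicator 1
  | j + 1 => Dᶜ.indicator fun z => ∫⁻ w, hitProb K D j w ∂K z

section MarkovChain

variable {K : Kernel Y Y} {μ : Y → Measure (ℕ → Y)} {D : Set Y}

theorem measurable_hitProb [IsSFiniteKernel K] (hD : MeasurableSet D) :
    ∀ j, Measurable (hitProb K D j)
  | 0 => measurable_one.indicator hD
  | j + 1 => (measurable_hitProb hD j).lintegral_kernel.indicator hD.compl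

theorem IsMarkovChain.lintegral_comp_eval_zero (hμ : IsMarkovChain K μ) {f : Y → ℝ≥0∞}
    (hf : Measurable f) (z : Y) : ∫⁻ ω, f (ω 0) ∂μ z = f z := by
  rw [← lintegral_map hf (measurable_pi_apply 0), hμ.init, lintegral_dirac' _ hf]

theorem IsMarkovChain.lintegral_mul_ite_hit_shift [IsSFiniteKernel K] (hμ : IsMarkovChain K μ)
    (hD : MeasurableSet D) (y : Y) (j : ℕ) :
    ∀ (k : ℕ) (g : (ℕ → Y) → ℝ≥0∞), Measurable[pastSigma k] g →
      ∫⁻ ω, g ω * (if hit D (shift k ω) = j then 1 else 0) ∂μ y =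
        ∫⁻ ω, g ω * hitProb K D j (ω k) ∂μ y := by
  induction j with
  | zero =>
    intro k g _
    refine lintegral_congr fun ω => ?_
    by_cases h : ω k ∈ D <;> simp [hitProb, hit_eq_zero_iff, shift, h]
  | succ j ih =>
    intro k g hg
    have hg' : Measurable[pastSigma k] fun ω => g ω * Dᶜ.indicator 1 (ω k) :=
      hg.mul ((measurable_one.indicator hD.compl).comp (measurable_eval_pastSigma le_rfl))
    calc ∫⁻ ω, g ω * (if hit D (shift k ω) = ↑(j + 1) then 1 else 0) ∂μ y
        = ∫⁻ ω, (g ω * Dᶜ.indicator 1 (ω k)) *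
            (if hit D (shift (k + 1) ω) = j then 1 else 0) ∂μ y := by
          refine lintegral_congr fun ω => ?_
          classical
          simp only [hit_eq_add_one_iff, shift_shift]
          by_cases h : ω k ∈ D <;> simp [h, shift]
      _ = ∫⁻ ω, (g ω * Dᶜ.indicator 1 (ω k)) * hitProb K D j (ω (k + 1)) ∂μ y :=
          ih (k + 1) _ (hg'.mono (pastSigma_mono k.le_succ) le_rfl)
      _ = ∫⁻ ω, (g ω * Dᶜ.indicator 1 (ω k)) * ∫⁻ z, hitProb K D j z ∂K (ω k) ∂μ y :=
          hμ.markov y k _ _ hg' (measurable_hitProb hD j)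
      _ = ∫⁻ ω, g ω * hitProb K D (j + 1) (ω k) ∂μ y := by
          refine lintegral_congr fun ω => ?_
          by_cases h : ω k ∈ D <;> simp [h, hitProb]

theorem IsMarkovChain.lintegral_mul_rEval_hit_shift [IsSFiniteKernel K]
    (hμ : IsMarkovChain K μ) (hD : MeasurableSet D) (r : ℕ → ℝ) (y : Y) {k : ℕ}
    {g : (ℕ → Y) → ℝ≥0∞} (hg : Measurable[pastSigma k] g) :
    ∫⁻ ω, g ω * rEval r (hit D (shift k ω)) ∂μ y =
      ∫⁻ ω, g ω * ∑' j, ENNReal.ofReal (r j) * hitProb K D j (ω k) ∂μ y := by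
  have hg' : Measurable g := hg.mono (pastSigma_le k) le_rfl
  have hevent (j : ℕ) : Measurable fun ω => g ω * if hit D (shift k ω) = j then 1 else 0 :=
    hg'.mul ((measurable_of_countable fun m : ℕ∞ => if m = j then (1 : ℝ≥0∞) else 0).comp
      ((measurable_hit hD).comp (measurable_shift k)))
  have hprob (j : ℕ) : Measurable fun ω => g ω * hitProb K D j (ω k) :=
    hg'.mul ((measurable_hitProb hD j).comp (measurable_pi_apply k))
  simp_rw [rEval_eq_tsum, ← ENNReal.tsum_mul_left, mul_left_comm (g _)]
  rw [lintegral_tsum fun j => ((hevent j).const_mul _).aemeasurable,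
    lintegral_tsum fun j => ((hprob j).const_mul _).aemeasurable]
  congr 1 with j
  rw [lintegral_const_mul _ (hevent j), lintegral_const_mul _ (hprob j),
    hμ.lintegral_mul_ite_hit_shift hD y j k g hg]

theorem IsMarkovChain.lintegral_rEval_hit [IsSFiniteKernel K] (hμ : IsMarkovChain K μ)
    (hD : MeasurableSet D) (r : ℕ → ℝ) (z : Y) :
    ∫⁻ ω, rEval r (hit D ω) ∂μ z = ∑' j, ENNReal.ofReal (r j) * hitProb K D j z := by
  have h := hμ.lintegral_mul_rEval_hit_shift hD r z (k := 0) (g := 1) measurable_const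
  simp only [Pi.one_apply, one_mul, shift_zero] at h
  rw [h, hμ.lintegral_comp_eval_zero
    (Measurable.tsum fun j => (measurable_hitProb hD j).const_mul _)]

end MarkovChain

theorem stmt4_general (K : Kernel Y Y) [IsMarkovKernel K] (D : Set Y) (hD : MeasurableSet D)
    (r : ℕ → ℝ)
    (μ : Y → Measure (ℕ → Y)) (hμ : IsMarkovChain K μ)
    (hhit : ∀ y : Y, μ y {ω | hit D ω < ⊤} = 1)
    (vr : Y → ℝ≥0∞) (hvr : ∀ y, vr y = ∫⁻ ω, rEval r (hit D ω) ∂(μ y)) :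
    ∀ y : Y,
      ∫⁻ ω, ∑' k : ℕ, (if (k : ℕ∞) ≤ hit D ω then ENNReal.ofReal (r k) else 0) ∂(μ y) =
      ∫⁻ ω, ∑' k : ℕ, (if (k : ℕ∞) ≤ hit D ω then vr (ω k) else 0) ∂(μ y) := by
  intro y
  have : IsProbabilityMeasure (μ y) := hμ.isProb y
  have hvr' (z : Y) : vr z = ∑' j, ENNReal.ofReal (r j) * hitProb K D j z :=
    (hvr z).trans (hμ.lintegral_rEval_hit hD r z)
  have hvrm : Measurable vr := by
    rw [funext hvr']
    exact Measurable.tsum fun j => (measurable_hitProb hD j).const_mul _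
  have hle (k : ℕ) : MeasurableSet[pastSigma k] {ω | (k : ℕ∞) ≤ hit D ω} :=
    measurableSet_natCast_le_hit hD k
  have hS : MeasurableSet {ω | hit D ω < ⊤} :=
    measurable_hit hD (.of_discrete : MeasurableSet (Set.Iio ⊤))
  have hae : ∀ᵐ ω ∂μ y, hit D ω < ⊤ :=
    (ae_iff_measure_eq hS.nullMeasurableSet).2 (by rw [hhit, measure_univ])
  have hstep (k : ℕ) :
      ∫⁻ ω, (if (k : ℕ∞) ≤ hit D ω then rEval r (hit D (shift k ω)) else 0) ∂μ y =
        ∫⁻ ω, (if (k : ℕ∞) ≤ hit D ω then vr (ω k) else 0) ∂μ y := by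
    simpa only [boole_mul, ← hvr'] using
      hμ.lintegral_mul_rEval_hit_shift hD r y
        (g := fun ω => if (k : ℕ∞) ≤ hit D ω then 1 else 0)
        (.ite (hle k) measurable_const measurable_const)
  calc _ = ∫⁻ ω, ∑' k : ℕ,
          (if (k : ℕ∞) ≤ hit D ω then rEval r (hit D (shift k ω)) else 0) ∂μ y :=
        lintegral_congr_ae (hae.mono fun ω => tsum_ite_le_hit_eq_rEval_shift r)
    _ = ∑' k : ℕ, ∫⁻ ω,
          (if (k : ℕ∞) ≤ hit D ω then rEval r (hit D (shift k ω)) else 0) ∂μ y :=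
        lintegral_tsum fun k => (Measurable.ite (pastSigma_le k _ (hle k))
          ((measurable_of_countable (rEval r)).comp
            ((measurable_hit hD).comp (measurable_shift k)))
          measurable_const).aemeasurable
    _ = ∑' k : ℕ, ∫⁻ ω, (if (k : ℕ∞) ≤ hit D ω then vr (ω k) else 0) ∂μ y := tsum_congr hstep
    _ = _ := (lintegral_tsum fun k => (Measurable.ite (pastSigma_le k _ (hle k))
          (hvrm.comp (measurable_pi_apply k)) measurable_const).aemeasurable).symm

/-- if the chain hits `D` a.s. from every starting point, then with
`v_r(y) = E_y[r(σ_D)]` one has `E_y[Σ_{k=0}^{σ_D} r(k)] = E_y[Σ_{k=0}^{σ_D} v_r(Y_k)]`. -/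
theorem stmt4 (K : Kernel Y Y) [IsMarkovKernel K] (D : Set Y) (hD : MeasurableSet D)
    (r : ℕ → ℝ) (hr : ∀ k, 0 ≤ r k)
    (μ : Y → Measure (ℕ → Y)) (hμ : IsMarkovChain K μ)
    (hhit : ∀ y : Y, μ y {ω | hit D ω < ⊤} = 1)
    (vr : Y → ℝ≥0∞) (hvr : ∀ y, vr y = ∫⁻ ω, rEval r (hit D ω) ∂(μ y)) :
    ∀ y : Y,
      ∫⁻ ω, ∑' k : ℕ, (if (k : ℕ∞) ≤ hit D ω then ENNReal.ofReal (r k) else 0) ∂(μ y) =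
      ∫⁻ ω, ∑' k : ℕ, (if (k : ℕ∞) ≤ hit D ω then vr (ω k) else 0) ∂(μ y) :=
  stmt4_general K D hD r μ hμ hhit vr hvr
end
end

section
/- For every η > 0, every x ∈ C_η and every A ∈ 𝒳, the independence sampler kernel satisfies P(x,A) ≥ η·π(C_η)·ν_η(A), where π(C_η) = ∫_{C_η} π dμ and ν_η(A) = π(A ∩ C_η)/π(C_η); that is, C_η is a small set for P with minorising constant ε = η·π(C_η) and minorising measure ν_η. -/
open MeasureTheory Filter Set
open scoped ENNReal

noncomputable section

variable {X : Type*} [MeasurableSpace X]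

/-- Acceptance probability of the independence sampler:
`a(x,y) = min((q(x)/π(x))·(π(y)/q(y)), 1)`. -/
def isa (π q : X → ℝ) (x y : X) : ℝ := min (q x / π x * (π y / q y)) 1

/-- The independence sampler kernel:
`P(x,A) = ∫_A a(x,y) q(y) μ(dy) + 1_A(x) ∫ (1 - a(x,y)) q(y) μ(dy)`. -/
def isKernel (μ : Measure X) (π q : X → ℝ) (x : X) : Measure X :=
  μ.withDensity (fun y => ENNReal.ofReal (isa π q x y * q y)) +
    (∫⁻ y, ENNReal.ofReal ((1 - isa π q x y) * q y) ∂μ) • Measure.dirac x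

/-- `C_η = {x : q(x)/π(x) ≥ η}`. -/
def Cset (π q : X → ℝ) (η : ℝ) : Set X := {y | η ≤ q y / π y}

/-- `ψ(η) = 1 - π(C_η)`. -/
def psiFn (μ : Measure X) (π q : X → ℝ) (η : ℝ) : ℝ :=
  1 - (∫⁻ y in Cset π q η, ENNReal.ofReal (π y) ∂μ).toReal

/-- for every `η > 0` and `x ∈ C_η`, the independence sampler kernel satisfies
`P(x,A) ≥ η·π(C_η)·ν_η(A) = η·π(A ∩ C_η)`; i.e. `C_η` is a small set with constant
`ε = η·π(C_η)` and minorising measure `ν_η(A) = π(A ∩ C_η)/π(C_η)`. -/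
theorem stmt12 (μ : Measure X) [SigmaFinite μ]
    (π q : X → ℝ) (hπm : Measurable π) (hqm : Measurable q)
    (hπpos : ∀ y, 0 < π y) (hqpos : ∀ y, 0 < q y)
    (hπ1 : ∫⁻ y, ENNReal.ofReal (π y) ∂μ = 1) (hq1 : ∫⁻ y, ENNReal.ofReal (q y) ∂μ = 1) :
    ∀ η : ℝ, 0 < η →
      0 < ∫⁻ y in Cset π q η, ENNReal.ofReal (π y) ∂μ →
      (∫⁻ y in Cset π q η, ENNReal.ofReal (π y) ∂μ) < 1 →
      ∀ x ∈ Cset π q η, ∀ A : Set X, MeasurableSet A →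
        ENNReal.ofReal η * ∫⁻ y in A ∩ Cset π q η, ENNReal.ofReal (π y) ∂μ ≤
          isKernel μ π q x A := by
  intro η hη _ _ x hx A hA
  have hCm : MeasurableSet (Cset π q η) := measurableSet_le measurable_const (hqm.div hπm)
  -- pointwise bound on A ∩ C
  have key : ∀ y ∈ A ∩ Cset π q η,
      ENNReal.ofReal η * ENNReal.ofReal (π y) ≤ ENNReal.ofReal (isa π q x y * q y) := by
    intro y hy
    have hyC : η ≤ q y / π y := hy.2
    have hxC : η ≤ q x / π x := hx
    rw [← ENNReal.ofReal_mul hη.le]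
    apply ENNReal.ofReal_le_ofReal
    have hπy := (hπpos y).le
    have hqy := hqpos y
    rw [isa, min_mul_of_nonneg _ _ hqy.le, one_mul]
    have h1 : η * π y ≤ q x / π x * (π y / q y) * q y := by
      rw [mul_assoc, div_mul_cancel₀ _ hqy.ne']
      exact mul_le_mul_of_nonneg_right hxC hπy
    have h2 : η * π y ≤ q y := by
      rw [le_div_iff₀ (hπpos y)] at hyC
      linarith
    exact le_min h1 h2
  calc ENNReal.ofReal η * ∫⁻ y in A ∩ Cset π q η, ENNReal.ofReal (π y) ∂μ
      = ∫⁻ y in A ∩ Cset π q η, ENNReal.ofReal η * ENNReal.ofReal (π y) ∂μ := by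
        rw [lintegral_const_mul _ (hπm.ennreal_ofReal)]
    _ ≤ ∫⁻ y in A ∩ Cset π q η, ENNReal.ofReal (isa π q x y * q y) ∂μ :=
        setLIntegral_mono_ae (by
          refine (Measurable.ennreal_ofReal ?_).aemeasurable
          exact (((measurable_const.div measurable_const).mul (hπm.div hqm)).min measurable_const).mul hqm)
          (Filter.Eventually.of_forall key)
    _ ≤ ∫⁻ y in A, ENNReal.ofReal (isa π q x y * q y) ∂μ :=
        lintegral_mono_set inter_subset_left
    _ = μ.withDensity (fun y => ENNReal.ofReal (isa π q x y * q y)) A :=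
        (withDensity_apply _ hA).symm
    _ ≤ isKernel μ π q x A := by
        rw [isKernel, Measure.add_apply]; exact le_self_add
end
end

section
/- Let W: X → [0,∞) be any measurable function and let η > 0. Then for every x ∉ C_η, the independence sampler kernel satisfies PW(x) − W(x) ≤ ∫_X (η ∧ q(y)/π(y))·W(y)·π(y) μ(dy) − (1 − ψ(η))·(q(x)/π(x))·W(x). -/
/-!
Write `w = q / π`. The accepted part of `P(x, ·)` has density
`a(x,y) q(y) = min (w(x) π(y)) (q(y))`. For `x ∉ C_η` we have `w(x) < η`, so this density is at
most `min η (w y) · π(y)`, which bounds the accepted part of `PW(x)`; and on `C_η` it equals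
`w(x) π(y)`, so the acceptance probability is at least `w(x) π(C_η) = w(x) (1 - ψ(η))`. As the
rejection probability is one minus the acceptance probability, the rejected part of `PW(x)` plus
`w(x) (1 - ψ(η)) W(x)` is at most `W(x)`.
-/

open MeasureTheory Filter Set
open scoped ENNReal

noncomputable section

variable {X : Type*} [MeasurableSpace X]

section Acceptance

variable {α : Type*} {π q : α → ℝ}

theorem isa_nonneg (hπ : ∀ y, 0 ≤ π y) (hq : ∀ y, 0 ≤ q y) (x y : α) : 0 ≤ isa π q x y :=
  le_min (by have := hπ x; have := hπ y; have := hq x; have := hq y; positivity) zero_le_one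

theorem isa_le_one (x y : α) : isa π q x y ≤ 1 := min_le_right _ _

theorem isa_mul_eq_min {x y : α} (hqy : 0 < q y) :
    isa π q x y * q y = min (q x / π x * π y) (q y) := by
  rw [isa, min_mul_of_nonneg _ _ hqy.le, one_mul, mul_assoc, div_mul_cancel₀ _ hqy.ne']

theorem isa_mul_le_min_mul (hπpos : ∀ y, 0 < π y) (hqpos : ∀ y, 0 < q y) {η : ℝ} {x : α}
    (hxη : q x / π x ≤ η) (y : α) :
    isa π q x y * q y ≤ min η (q y / π y) * π y := by
  rw [isa_mul_eq_min (hqpos y), min_mul_of_nonneg _ _ (hπpos y).le,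
    div_mul_cancel₀ _ (hπpos y).ne']
  exact min_le_min_right _ (mul_le_mul_of_nonneg_right hxη (hπpos y).le)

end Acceptance

section IndependenceSampler

variable {μ : Measure X} {π q : X → ℝ}

theorem measurable_ofReal_isa_mul (hπm : Measurable π) (hqm : Measurable q) (x : X) :
    Measurable fun y => ENNReal.ofReal (isa π q x y * q y) := by
  unfold isa
  fun_prop

theorem lintegral_isKernel (hπm : Measurable π) (hqm : Measurable q) (x : X)
    {f : X → ℝ≥0∞} (hf : Measurable f) :
    ∫⁻ y, f y ∂isKernel μ π q x =
      ∫⁻ y, ENNReal.ofReal (isa π q x y * q y) * f y ∂μ +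
        (∫⁻ y, ENNReal.ofReal ((1 - isa π q x y) * q y) ∂μ) * f x := by
  rw [isKernel, lintegral_add_measure, lintegral_smul_measure, lintegral_dirac' x hf,
    lintegral_withDensity_eq_lintegral_mul μ
      (measurable_ofReal_isa_mul hπm hqm x) hf]
  rfl

theorem lintegral_accept_add_lintegral_reject (hπm : Measurable π) (hqm : Measurable q)
    (hπ : ∀ y, 0 ≤ π y) (hq : ∀ y, 0 ≤ q y) (x : X) :
    ∫⁻ y, ENNReal.ofReal (isa π q x y * q y) ∂μ +
        ∫⁻ y, ENNReal.ofReal ((1 - isa π q x y) * q y) ∂μ =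
      ∫⁻ y, ENNReal.ofReal (q y) ∂μ := by
  rw [← lintegral_add_left (measurable_ofReal_isa_mul hπm hqm x)]
  refine lintegral_congr fun y => ?_
  rw [← ENNReal.ofReal_add (mul_nonneg (isa_nonneg hπ hq x y) (hq y))
    (mul_nonneg (sub_nonneg.2 (isa_le_one x y)) (hq y))]
  ring_nf

/-- A move from `x ∉ C_η` to `y ∈ C_η` is accepted with probability `w(x) / w(y) < 1`,
where `w = q / π`. -/
theorem ofReal_mul_lintegral_Cset_le_lintegral_accept (hπm : Measurable π)
    (hqm : Measurable q) (hπpos : ∀ y, 0 < π y) (hqpos : ∀ y, 0 < q y) {η : ℝ} {x : X}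
    (hx : x ∉ Cset π q η) :
    ENNReal.ofReal (q x / π x) * ∫⁻ y in Cset π q η, ENNReal.ofReal (π y) ∂μ ≤
      ∫⁻ y, ENNReal.ofReal (isa π q x y * q y) ∂μ := by
  have hxη : q x / π x < η := not_le.mp hx
  have hr : 0 ≤ q x / π x := div_nonneg (hqpos x).le (hπpos x).le
  calc ENNReal.ofReal (q x / π x) * ∫⁻ y in Cset π q η, ENNReal.ofReal (π y) ∂μ
      = ∫⁻ y in Cset π q η, ENNReal.ofReal (q x / π x * π y) ∂μ := by
        rw [← lintegral_const_mul _ hπm.ennreal_ofReal]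
        simp_rw [ENNReal.ofReal_mul hr]
    _ ≤ ∫⁻ y in Cset π q η, ENNReal.ofReal (isa π q x y * q y) ∂μ := by
        refine setLIntegral_mono (measurable_ofReal_isa_mul hπm hqm x)
          fun y (hy : η ≤ q y / π y) => ENNReal.ofReal_le_ofReal ?_
        rw [isa_mul_eq_min (hqpos y)]
        refine le_min le_rfl ?_
        have := mul_le_mul_of_nonneg_right (hxη.trans_le hy).le (hπpos y).le
        rwa [div_mul_cancel₀ _ (hπpos y).ne'] at this
    _ ≤ ∫⁻ y, ENNReal.ofReal (isa π q x y * q y) ∂μ := setLIntegral_le_lintegral _ _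

theorem ofReal_one_sub_psiFn_mul_le (η : ℝ) (t : ℝ) :
    ENNReal.ofReal ((1 - psiFn μ π q η) * t) ≤
      (∫⁻ y in Cset π q η, ENNReal.ofReal (π y) ∂μ) * ENNReal.ofReal t := by
  rw [psiFn, sub_sub_cancel, ENNReal.ofReal_mul ENNReal.toReal_nonneg]
  exact mul_le_mul_left ENNReal.ofReal_toReal_le _

end IndependenceSampler

theorem stmt13_general (μ : Measure X)
    (π q : X → ℝ) (hπm : Measurable π) (hqm : Measurable q)
    (hπpos : ∀ y, 0 < π y) (hqpos : ∀ y, 0 < q y)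
    (hq1 : ∫⁻ y, ENNReal.ofReal (q y) ∂μ = 1) :
    ∀ W : X → ℝ, Measurable W → (∀ y, 0 ≤ W y) →
      ∀ η : ℝ, 0 < η → ∀ x, x ∉ Cset π q η →
        (∫⁻ y, ENNReal.ofReal (W y) ∂(isKernel μ π q x))
            + ENNReal.ofReal ((1 - psiFn μ π q η) * (q x / π x) * W x) ≤
          ENNReal.ofReal (W x)
            + ∫⁻ y, ENNReal.ofReal (min η (q y / π y) * W y * π y) ∂μ := by
  intro W hWm hW0 η _ x hx
  have hπ0 : ∀ y, 0 ≤ π y := fun y => (hπpos y).le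
  have hq0 : ∀ y, 0 ≤ q y := fun y => (hqpos y).le
  set accept := ∫⁻ y, ENNReal.ofReal (isa π q x y * q y) ∂μ
  set reject := ∫⁻ y, ENNReal.ofReal ((1 - isa π q x y) * q y) ∂μ
  have hr : 0 ≤ q x / π x := div_nonneg (hqpos x).le (hπpos x).le
  have hψ : ENNReal.ofReal ((1 - psiFn μ π q η) * (q x / π x) * W x) ≤
      accept * ENNReal.ofReal (W x) := by
    rw [mul_assoc]
    refine (ofReal_one_sub_psiFn_mul_le η _).trans ?_
    rw [ENNReal.ofReal_mul hr, ← mul_assoc, mul_comm (∫⁻ _ in _, _ ∂_)]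
    gcongr
    exact ofReal_mul_lintegral_Cset_le_lintegral_accept hπm hqm hπpos hqpos hx
  have hmass : accept + reject = 1 :=
    (lintegral_accept_add_lintegral_reject hπm hqm hπ0 hq0 x).trans hq1
  rw [lintegral_isKernel hπm hqm x hWm.ennreal_ofReal]
  calc _ ≤ ∫⁻ y, ENNReal.ofReal (isa π q x y * q y) * ENNReal.ofReal (W y) ∂μ +
          reject * ENNReal.ofReal (W x) + accept * ENNReal.ofReal (W x) := by gcongr
    _ = ENNReal.ofReal (W x) +
          ∫⁻ y, ENNReal.ofReal (isa π q x y * q y) * ENNReal.ofReal (W y) ∂μ := by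
        rw [add_assoc, ← add_mul, add_comm reject, hmass, one_mul, add_comm]
    _ ≤ _ := by
        gcongr with y
        rw [← ENNReal.ofReal_mul (mul_nonneg (isa_nonneg hπ0 hq0 x y) (hq0 y)),
          mul_right_comm _ (W y)]
        exact ENNReal.ofReal_le_ofReal (mul_le_mul_of_nonneg_right
          (isa_mul_le_min_mul hπpos hqpos (not_le.mp hx).le y) (hW0 y))

/-- for any measurable `W : X → [0,∞)`, `η > 0` and `x ∉ C_η`, the
independence sampler kernel satisfies
`PW(x) - W(x) ≤ ∫ (η ∧ q/π)(y) W(y) π(y) μ(dy) - (1 - ψ(η))·(q(x)/π(x))·W(x)`,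
stated here in `[0,∞]` in the equivalent additive form. -/
theorem stmt13 (μ : Measure X) [SigmaFinite μ]
    (π q : X → ℝ) (hπm : Measurable π) (hqm : Measurable q)
    (hπpos : ∀ y, 0 < π y) (hqpos : ∀ y, 0 < q y)
    (hπ1 : ∫⁻ y, ENNReal.ofReal (π y) ∂μ = 1) (hq1 : ∫⁻ y, ENNReal.ofReal (q y) ∂μ = 1) :
    ∀ W : X → ℝ, Measurable W → (∀ y, 0 ≤ W y) →
      ∀ η : ℝ, 0 < η → ∀ x, x ∉ Cset π q η →
        (∫⁻ y, ENNReal.ofReal (W y) ∂(isKernel μ π q x))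
            + ENNReal.ofReal ((1 - psiFn μ π q η) * (q x / π x) * W x) ≤
          ENNReal.ofReal (W x)
            + ∫⁻ y, ENNReal.ofReal (min η (q y / π y) * W y * π y) ∂μ :=
  stmt13_general μ π q hπm hqm hπpos hqpos hq1
end
end

section
/- Let φ ∈ 𝒞. Then: (i) the function t ↦ log φ(H_φ^{-1}(t)) is nondecreasing and concave on [0,∞), with derivative φ'(H_φ^{-1}(t)) tending to 0 as t → ∞; (ii) consequently the sequence r_φ(n) = φ(H_φ^{-1}(n))/φ(1) is subgeometric: r_φ(0) = 1, r_φ is nondecreasing, and n ↦ log r_φ(n)/n is nonincreasing with limit 0 as n → ∞. -/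
open Filter Set

noncomputable section

/-- `φ ∈ 𝒞`: concave, differentiable on `[1,∞)` with derivative `φ'`, positive,
`φ(1) > 0`, `φ(v) → ∞` and `φ'(v) → 0` as `v → ∞`. -/
structure MemC (φ φ' : ℝ → ℝ) : Prop where
  concave : ConcaveOn ℝ (Set.Ici 1) φ
  pos : ∀ v ∈ Set.Ici (1 : ℝ), 0 < φ v
  hasDeriv : ∀ v ∈ Set.Ici (1 : ℝ), HasDerivWithinAt φ (φ' v) (Set.Ici 1) v
  tendsto_atTop : Tendsto φ atTop atTop
  deriv_tendsto_zero : Tendsto φ' atTop (nhds 0)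

/-- `H_φ(v) = ∫_1^v dt/φ(t)`. -/
def Hphi (φ : ℝ → ℝ) (v : ℝ) : ℝ := ∫ t in (1 : ℝ)..v, 1 / φ t

/-- `Hinv` is the inverse `H_φ^{-1} : [0,∞) → [1,∞)` of `H_φ`. -/
def IsHphiInv (φ : ℝ → ℝ) (Hinv : ℝ → ℝ) : Prop :=
  (∀ t ∈ Set.Ici (0 : ℝ), 1 ≤ Hinv t ∧ Hphi φ (Hinv t) = t) ∧
  (∀ v ∈ Set.Ici (1 : ℝ), Hinv (Hphi φ v) = v)

/-!
The inverse function rule gives `(H_φ⁻¹)' = φ ∘ H_φ⁻¹`, so by the chain rule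
`F := log ∘ φ ∘ H_φ⁻¹` has derivative `φ' ∘ H_φ⁻¹`. Concavity of `φ` makes `φ'` nonincreasing,
and `φ' → 0` makes it nonnegative; since `H_φ⁻¹` is increasing and unbounded, `F` is
nondecreasing and concave with `F' → 0`.

For (ii), `log r_φ(n) = F(n) - F(0)`. Concavity of `F` makes `(F(n) - F(0))/n` nonincreasing,
and `(F(n) - F(0))/n` is the Cesàro mean of the increments `F(i+1) - F(i) ∈ [0, F'(i)]`,
which tend to `0`.
-/

open Real Topology

theorem HasDerivWithinAt.of_local_left_inverse {𝕜 : Type*} [NontriviallyNormedField 𝕜]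
    {f g : 𝕜 → 𝕜} {f' a : 𝕜} {s t : Set 𝕜} (hg : Tendsto g (𝓝[s] a) (𝓝[t] (g a)))
    (hf : HasDerivWithinAt f f' t (g a)) (hf' : f' ≠ 0) (ha : a ∈ s)
    (hfg : ∀ᶠ x in 𝓝[s] a, f (g x) = x) : HasDerivWithinAt g f'⁻¹ s a :=
  HasFDerivWithinAt.of_local_left_inverse
    (f' := ContinuousLinearEquiv.unitsEquivAut 𝕜 (Units.mk0 f' hf')) hg hf ha hfg

section LeftInverse

variable {α β : Type*} [LinearOrder α] [LinearOrder β] {f : α → β} {g : β → α}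
  {s : Set β} {c : α}

theorem StrictMonoOn.monotoneOn_of_leftInvOn {t : Set α} (hf : StrictMonoOn f t)
    (hg : MapsTo g s t) (hfg : LeftInvOn f g s) : MonotoneOn g s := fun a ha b hb hab =>
  (hf.le_iff_le (hg ha) (hg hb)).1 (by rwa [hfg ha, hfg hb])

theorem StrictMonoOn.tendsto_nhdsWithin_of_leftInvOn [TopologicalSpace α] [OrderTopology α]
    [TopologicalSpace β] [OrderTopology β] (hf : StrictMonoOn f (Ici c))
    (hg : MapsTo g s (Ici c)) (hfg : LeftInvOn f g s) {b : β} (hb : b ∈ s) :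
    Tendsto g (𝓝[s] b) (𝓝[Ici c] (g b)) := by
  refine tendsto_nhdsWithin_iff.2 ⟨tendsto_order.2 ⟨fun a ha => ?_, fun a ha => ?_⟩,
    eventually_mem_nhdsWithin.mono fun x hx => hg hx⟩
  · rcases lt_or_ge a c with hac | hca
    · exact eventually_mem_nhdsWithin.mono fun x hx => hac.trans_le (hg hx)
    have hab : f a < b := by simpa only [hfg hb] using (hf.lt_iff_lt hca (hg hb)).2 ha
    filter_upwards [eventually_mem_nhdsWithin, nhdsWithin_le_nhds (Ioi_mem_nhds hab)]
      with x hx hax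
    exact (hf.lt_iff_lt hca (hg hx)).1 (by rwa [hfg hx])
  · have hca : c ≤ a := (hg hb).trans ha.le
    have hba : b < f a := by simpa only [hfg hb] using (hf.lt_iff_lt (hg hb) hca).2 ha
    filter_upwards [eventually_mem_nhdsWithin, nhdsWithin_le_nhds (Iio_mem_nhds hba)]
      with x hx hxa
    exact (hf.lt_iff_lt (hg hx) hca).1 (by rwa [hfg hx])

end LeftInverse

section Ici

variable {f f' : ℝ → ℝ} {a : ℝ}

theorem hasDerivWithinAt_integral_Ici (hf : ContinuousOn f (Ici a)) {v : ℝ} (hv : a ≤ v) :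
    HasDerivWithinAt (fun u => ∫ x in a..u, f x) (f v) (Ici a) v := by
  set f₀ : ℝ → ℝ := fun x => f (max a x)
  have hf₀ : Continuous f₀ :=
    hf.comp_continuous (continuous_const.max continuous_id) fun x => le_max_left a x
  have heq : EqOn (fun u => ∫ x in a..u, f₀ x) (fun u => ∫ x in a..u, f x) (Ici a) :=
    fun u hu => intervalIntegral.integral_congr fun x hx => by
      rw [uIcc_of_le hu] at hx
      simp only [f₀, max_eq_right hx.1]
  have hd := (hf₀.integral_hasStrictDerivAt a v).hasDerivAt.hasDerivWithinAt (s := Ici a)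
  simpa only [f₀, max_eq_right hv] using hd.congr (fun u hu => (heq hu).symm) (heq hv).symm

theorem ConcaveOn.antitoneOn_of_hasDerivWithinAt {S : Set ℝ} (hfc : ConcaveOn ℝ S f)
    (hf : ∀ x ∈ S, HasDerivWithinAt f (f' x) S x) : AntitoneOn f' S := by
  intro x hx y hy hxy
  rcases hxy.eq_or_lt with rfl | hlt
  · exact le_rfl
  exact (hfc.le_slope_of_hasDerivWithinAt hx hy hlt (hf y hy)).trans
    (hfc.slope_le_of_hasDerivWithinAt hx hy hlt (hf x hx))

theorem monotoneOn_Ici_of_hasDerivWithinAt_nonneg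
    (hf : ∀ x ∈ Ici a, HasDerivWithinAt f (f' x) (Ici a) x) (hf' : ∀ x ∈ Ici a, 0 ≤ f' x) :
    MonotoneOn f (Ici a) :=
  monotoneOn_of_hasDerivWithinAt_nonneg (convex_Ici a)
    (fun x hx => (hf x hx).continuousWithinAt)
    (fun x hx => (hf x (interior_subset hx)).mono interior_subset)
    (fun x hx => hf' x (interior_subset hx))

theorem concaveOn_Ici_of_hasDerivWithinAt_antitoneOn
    (hf : ∀ x ∈ Ici a, HasDerivWithinAt f (f' x) (Ici a) x) (hf' : AntitoneOn f' (Ici a)) :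
    ConcaveOn ℝ (Ici a) f := by
  have hderiv : ∀ x ∈ interior (Ici a), HasDerivAt f (f' x) x := fun x hx => by
    rw [interior_Ici] at hx
    exact (hf x (mem_Ici.2 hx.out.le)).hasDerivAt (Ici_mem_nhds hx)
  refine AntitoneOn.concaveOn_of_deriv (convex_Ici a) (fun x hx => (hf x hx).continuousWithinAt)
    (fun x hx => (hderiv x hx).differentiableAt.differentiableWithinAt) fun x hx y hy hxy => ?_
  rw [(hderiv x hx).deriv, (hderiv y hy).deriv]
  exact hf' (interior_subset hx) (interior_subset hy) hxy

theorem tendsto_sub_div_natCast_of_concaveOn (hfc : ConcaveOn ℝ (Ici 0) f)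
    (hfm : MonotoneOn f (Ici 0)) (hf : ∀ x ∈ Ici 0, HasDerivWithinAt f (f' x) (Ici 0) x)
    (hf' : Tendsto f' atTop (𝓝 0)) :
    Tendsto (fun n : ℕ => (f n - f 0) / n) atTop (𝓝 0) := by
  have hmem (n : ℕ) : (n : ℝ) ∈ Ici 0 := mem_Ici.2 n.cast_nonneg
  have hincr : Tendsto (fun i : ℕ => f (i + 1) - f i) atTop (𝓝 0) := by
    refine tendsto_of_tendsto_of_tendsto_of_le_of_le tendsto_const_nhds
      (hf'.comp tendsto_natCast_atTop_atTop) (fun i => sub_nonneg.2 ?_) fun i => ?_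
    · exact hfm (hmem i) (mem_Ici.2 (by positivity)) (by linarith)
    · show f (i + 1) - f i ≤ f' i
      have := hfc.slope_le_of_hasDerivWithinAt (hmem i) (mem_Ici.2 (by positivity))
        (lt_add_one (i : ℝ)) (hf i (hmem i))
      simpa only [slope_def_field, add_sub_cancel_left, div_one] using this
  refine hincr.cesaro.congr fun n => ?_
  have htelescope := Finset.sum_range_sub (fun i : ℕ => f i) n
  push_cast at htelescope
  rw [htelescope, div_eq_inv_mul]

theorem subgeometric_exp_of_concaveOn (hfc : ConcaveOn ℝ (Ici 0) f)
    (hfm : MonotoneOn f (Ici 0)) (hf : ∀ x ∈ Ici 0, HasDerivWithinAt f (f' x) (Ici 0) x)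
    (hf' : Tendsto f' atTop (𝓝 0)) : Subgeometric (fun n : ℕ => exp (f n - f 0)) := by
  have hmem (n : ℕ) : (n : ℝ) ∈ Ici 0 := mem_Ici.2 n.cast_nonneg
  have hmono : Monotone fun n : ℕ => exp (f n - f 0) := fun n m hnm =>
    exp_le_exp.2 (sub_le_sub_right (hfm (hmem n) (hmem m) (Nat.cast_le.2 hnm)) _)
  refine ⟨by simp, fun n => ?_, hmono, fun n m hn hnm => ?_, ?_⟩
  · simpa using hmono n.zero_le
  · have hn0 : (0 : ℝ) < n := by exact_mod_cast hn
    have := hfc.neg.secant_mono (hmem 0) (hmem n) (hmem m) (by simpa using hn0.ne')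
      (by simpa using (hn0.trans_le (Nat.cast_le.2 hnm)).ne') (Nat.cast_le.2 hnm)
    simp only [Pi.neg_apply, Nat.cast_zero, sub_zero, neg_sub_neg] at this
    simp only [log_exp]
    rw [← neg_sub (f n), ← neg_sub (f m), neg_div, neg_div] at this
    exact neg_le_neg_iff.1 this
  · simpa only [log_exp] using tendsto_sub_div_natCast_of_concaveOn hfc hfm hf hf'

end Ici

namespace MemC

variable {φ φ' : ℝ → ℝ} (hφ : MemC φ φ')
include hφ

theorem continuousOn : ContinuousOn φ (Ici 1) := fun v hv =>
  (hφ.hasDeriv v hv).continuousWithinAt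

theorem antitoneOn_deriv : AntitoneOn φ' (Ici 1) :=
  hφ.concave.antitoneOn_of_hasDerivWithinAt hφ.hasDeriv

theorem deriv_nonneg {v : ℝ} (hv : v ∈ Ici 1) : 0 ≤ φ' v :=
  le_of_tendsto hφ.deriv_tendsto_zero <| eventually_atTop.2
    ⟨v, fun _ hw => hφ.antitoneOn_deriv hv (mem_Ici.2 (hv.out.trans hw)) hw⟩

theorem hasDerivWithinAt_Hphi {v : ℝ} (hv : v ∈ Ici 1) :
    HasDerivWithinAt (Hphi φ) (1 / φ v) (Ici 1) v :=
  hasDerivWithinAt_integral_Ici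
    (continuousOn_const.div hφ.continuousOn fun w hw => (hφ.pos w hw).ne') hv

theorem strictMonoOn_Hphi : StrictMonoOn (Hphi φ) (Ici 1) :=
  strictMonoOn_of_hasDerivWithinAt_pos (convex_Ici 1)
    (fun _ hv => (hφ.hasDerivWithinAt_Hphi hv).continuousWithinAt)
    (fun _ hv => (hφ.hasDerivWithinAt_Hphi (interior_subset hv)).mono interior_subset)
    fun v hv => one_div_pos.2 (hφ.pos v (interior_subset hv))

end MemC

namespace IsHphiInv

variable {φ φ' Hinv : ℝ → ℝ} (hHinv : IsHphiInv φ Hinv)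
include hHinv

theorem mapsTo : MapsTo Hinv (Ici 0) (Ici 1) := fun t ht => (hHinv.1 t ht).1

theorem leftInvOn : LeftInvOn (Hphi φ) Hinv (Ici 0) := fun t ht => (hHinv.1 t ht).2

theorem apply_zero : Hinv 0 = 1 := by
  simpa only [Hphi, intervalIntegral.integral_same] using hHinv.2 1 self_mem_Ici

variable (hφ : MemC φ φ')
include hφ

theorem monotoneOn : MonotoneOn Hinv (Ici 0) :=
  hφ.strictMonoOn_Hphi.monotoneOn_of_leftInvOn hHinv.mapsTo hHinv.leftInvOn

theorem tendsto_atTop : Tendsto Hinv atTop atTop := by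
  refine Filter.tendsto_atTop.2 fun b => ?_
  have hv : max b 1 ∈ Ici 1 := le_max_right b 1
  have hH : Hphi φ (max b 1) ∈ Ici 0 := by
    simpa only [Hphi, intervalIntegral.integral_same, mem_Ici] using
      hφ.strictMonoOn_Hphi.monotoneOn self_mem_Ici hv hv.out
  filter_upwards [eventually_ge_atTop (Hphi φ (max b 1))] with t ht
  calc b ≤ max b 1 := le_max_left b 1
    _ = Hinv (Hphi φ (max b 1)) := (hHinv.2 _ hv).symm
    _ ≤ Hinv t := hHinv.monotoneOn hφ hH (mem_Ici.2 (hH.out.trans ht)) ht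

theorem hasDerivWithinAt {t : ℝ} (ht : t ∈ Ici 0) :
    HasDerivWithinAt Hinv (φ (Hinv t)) (Ici 0) t := by
  have hd := (hφ.hasDerivWithinAt_Hphi (hHinv.mapsTo ht)).of_local_left_inverse
    (hφ.strictMonoOn_Hphi.tendsto_nhdsWithin_of_leftInvOn hHinv.mapsTo hHinv.leftInvOn ht)
    (one_div_ne_zero (hφ.pos _ (hHinv.mapsTo ht)).ne') ht
    (eventually_mem_nhdsWithin.mono hHinv.leftInvOn)
  rwa [one_div, inv_inv] at hd

theorem hasDerivWithinAt_log {t : ℝ} (ht : t ∈ Ici 0) :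
    HasDerivWithinAt (fun s => Real.log (φ (Hinv s))) (φ' (Hinv t)) (Ici 0) t := by
  have hpos := hφ.pos _ (hHinv.mapsTo ht)
  have hd := ((hφ.hasDeriv _ (hHinv.mapsTo ht)).comp t (hHinv.hasDerivWithinAt hφ ht)
    hHinv.mapsTo).log hpos.ne'
  rwa [Function.comp_apply, mul_div_cancel_right₀ _ hpos.ne'] at hd

theorem antitoneOn_deriv_comp : AntitoneOn (fun t => φ' (Hinv t)) (Ici 0) := fun _ ha _ hb hab =>
  hφ.antitoneOn_deriv (hHinv.mapsTo ha) (hHinv.mapsTo hb) (hHinv.monotoneOn hφ ha hb hab)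

end IsHphiInv

/-- for `φ ∈ 𝒞`, (i) `t ↦ log φ(H_φ^{-1}(t))` is nondecreasing and concave
on `[0,∞)` with derivative `φ'(H_φ^{-1}(t))` tending to `0` at `∞`; (ii) consequently
`r_φ(n) = φ(H_φ^{-1}(n))/φ(1)` is a subgeometric sequence. -/
theorem stmt15 (φ φ' : ℝ → ℝ) (hφ : MemC φ φ') (Hinv : ℝ → ℝ) (hHinv : IsHphiInv φ Hinv) :
    -- (i)
    (MonotoneOn (fun t => Real.log (φ (Hinv t))) (Ici 0) ∧
     ConcaveOn ℝ (Ici 0) (fun t => Real.log (φ (Hinv t))) ∧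
     (∀ t ∈ Ici (0 : ℝ),
        HasDerivWithinAt (fun s => Real.log (φ (Hinv s))) (φ' (Hinv t)) (Ici 0) t) ∧
     Tendsto (fun t : ℝ => φ' (Hinv t)) atTop (nhds 0)) ∧
    -- (ii)
    Subgeometric (fun n : ℕ => φ (Hinv n) / φ 1) := by
  set F : ℝ → ℝ := fun t => Real.log (φ (Hinv t))
  have hderiv : ∀ t ∈ Ici (0 : ℝ), HasDerivWithinAt F (φ' (Hinv t)) (Ici 0) t :=
    fun t ht => hHinv.hasDerivWithinAt_log hφ ht
  have hmono : MonotoneOn F (Ici 0) := monotoneOn_Ici_of_hasDerivWithinAt_nonneg hderiv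
    fun t ht => hφ.deriv_nonneg (hHinv.mapsTo ht)
  have hconc : ConcaveOn ℝ (Ici 0) F :=
    concaveOn_Ici_of_hasDerivWithinAt_antitoneOn hderiv (hHinv.antitoneOn_deriv_comp hφ)
  have hlim : Tendsto (fun t => φ' (Hinv t)) atTop (𝓝 0) :=
    hφ.deriv_tendsto_zero.comp (hHinv.tendsto_atTop hφ)
  have hr : (fun n : ℕ => φ (Hinv n) / φ 1) = fun n : ℕ => exp (F n - F 0) := by
    funext n
    simp only [F, hHinv.apply_zero]
    rw [exp_sub, exp_log (hφ.pos _ (hHinv.mapsTo (mem_Ici.2 n.cast_nonneg))),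
      exp_log (hφ.pos 1 self_mem_Ici)]
  exact ⟨⟨hmono, hconc, hderiv, hlim⟩, hr ▸ subgeometric_exp_of_concaveOn hconc hmono hderiv hlim⟩
end
end

section
/- Let K be a Markov kernel on a measurable space (Y,𝒴), D ∈ 𝒴, r: ℕ → (0,∞) with R(n) = Σ_{k=0}^{n−1} r(k), b ≥ 0 and M ≥ 0. Let (U_n)_{n≥0} be measurable functions U_n: Y → (0,∞) satisfying, for every n ≥ 0 and every z ∈ Y, (K U_{n+1})(z) ≤ U_n(z) − r(n) + b·r(n)·1_D(z). For the canonical chain (Z_n)_{n≥0} with kernel K started at z, define W_n = U_n(Z_n) + R(n) + M and T_n = ∏_{i=0}^{n−1} (W_i + b·r(i)·1_D(Z_i))/W_i (with T_0 = 1). Then (W_n·T_n^{-1})_{n≥0} is a supermartingale with respect to the natural filtration of (Z_n); in particular, for every n ≥ 0, E_z[W_n·T_n^{-1}] ≤ U_0(z) + M. -/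
/-!
Conditionally on the past up to time `n`, the drift condition gives
`E[W_{n+1} | Z_0, …, Z_n] ≤ W_n + b r(n) 1_D(Z_n) = W_n T_{n+1} / T_n`,
and `T_{n+1}` is itself a function of `Z_0, …, Z_n`. Dividing by it yields the supermartingale
inequality for `W_n / T_n`; iterating it down to `W_0 / T_0 = U_0(Z_0) + M` gives the bound
on the expectation.
-/

open MeasureTheory ProbabilityTheory Filter
open scoped ENNReal

noncomputable section

variable {Y : Type*} [MeasurableSpace Y]

/-- `W_n(ω) = U_n(Z_n) + R(n) + M`. -/
def Wfun (r : ℕ → ℝ) (M : ℝ) (U : ℕ → Y → ℝ) (n : ℕ) (ω : ℕ → Y) : ℝ :=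
  U n (ω n) + (∑ k ∈ Finset.range n, r k) + M

/-- `T_n(ω) = ∏_{i=0}^{n-1} (W_i + b·r(i)·1_D(Z_i))/W_i` (so `T_0 = 1`). -/
def Tfun (D : Set Y) (r : ℕ → ℝ) (b M : ℝ) (U : ℕ → Y → ℝ) (n : ℕ) (ω : ℕ → Y) : ℝ :=
  ∏ i ∈ Finset.range n,
    (Wfun r M U i ω + b * r i * D.indicator (fun _ => 1) (ω i)) / Wfun r M U i ω

abbrev pastUpTo (n : ℕ) : MeasurableSpace (ℕ → Y) :=
  MeasurableSpace.comap (fun ω (i : Fin (n + 1)) => ω i) inferInstance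

theorem measurable_pastUpTo_apply {i n : ℕ} (hi : i ≤ n) :
    Measurable[pastUpTo n] (fun ω : ℕ → Y => ω i) :=
  (measurable_pi_apply (X := fun _ : Fin (n + 1) => Y) ⟨i, Nat.lt_succ_of_le hi⟩).comp
    (comap_measurable _)

theorem ENNReal.div_ofReal_mul_ofReal_mul {g : ℝ≥0∞} {x t : ℝ} (ht : 0 < t) :
    g / ENNReal.ofReal t * ENNReal.ofReal (x * t) = g * ENNReal.ofReal x := by
  rw [ENNReal.ofReal_mul' ht.le, mul_comm (ENNReal.ofReal x), ← mul_assoc,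
    ENNReal.div_mul_cancel (ENNReal.ofReal_pos.2 ht).ne' ENNReal.ofReal_ne_top]

theorem lintegral_ofReal_add_const_le {ν : Measure Y} [IsProbabilityMeasure ν] {u : Y → ℝ}
    (hu : Measurable u) (hu_pos : ∀ w, 0 < u w) {a c : ℝ} (hc : 0 ≤ c)
    (h : ∫⁻ w, ENNReal.ofReal (u w) ∂ν ≤ ENNReal.ofReal a) :
    ∫⁻ w, ENNReal.ofReal (u w + c) ∂ν ≤ ENNReal.ofReal (a + c) := by
  have hint_pos : 0 < ∫⁻ w, ENNReal.ofReal (u w) ∂ν := by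
    rw [lintegral_pos_iff_support hu.ennreal_ofReal]
    simp [Function.support, hu_pos]
  have ha : 0 ≤ a := (ENNReal.ofReal_pos.1 (hint_pos.trans_le h)).le
  calc ∫⁻ w, ENNReal.ofReal (u w + c) ∂ν
      = ∫⁻ w, ENNReal.ofReal (u w) ∂ν + ENNReal.ofReal c := by
        simp_rw [ENNReal.ofReal_add (hu_pos _).le hc]
        rw [lintegral_add_right _ measurable_const, lintegral_const, measure_univ, mul_one]
    _ ≤ ENNReal.ofReal a + ENNReal.ofReal c := by gcongr
    _ = ENNReal.ofReal (a + c) := (ENNReal.ofReal_add ha hc).symm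

namespace IsMarkovChain

variable {K : Kernel Y Y} {μ : Y → Measure (ℕ → Y)}

theorem lintegral_comp_zero (hμ : IsMarkovChain K μ) (y : Y) {f : Y → ℝ≥0∞}
    (hf : Measurable f) : ∫⁻ ω, f (ω 0) ∂(μ y) = f y := by
  rw [← lintegral_map hf (measurable_pi_apply 0), hμ.init, lintegral_dirac' _ hf]

theorem lintegral_mul_comp_succ_le (hμ : IsMarkovChain K μ) (y : Y) (n : ℕ)
    {g : (ℕ → Y) → ℝ≥0∞} (hg : Measurable[pastUpTo n] g) {f h : Y → ℝ≥0∞}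
    (hf : Measurable f) (hfh : ∀ x, ∫⁻ w, f w ∂(K x) ≤ h x) :
    ∫⁻ ω, g ω * f (ω (n + 1)) ∂(μ y) ≤ ∫⁻ ω, g ω * h (ω n) ∂(μ y) := by
  rw [hμ.markov y n g f hg hf]
  exact lintegral_mono fun ω => mul_le_mul_right (hfh _) _

end IsMarkovChain

section Drift

variable {D : Set Y} {r : ℕ → ℝ} {b M : ℝ} {U : ℕ → Y → ℝ}

omit [MeasurableSpace Y] in
theorem Wfun_pos (hr : ∀ n, 0 ≤ r n) (hM : 0 ≤ M) (hU : ∀ n z, 0 < U n z) (n : ℕ)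
    (ω : ℕ → Y) : 0 < Wfun r M U n ω := by
  have := Finset.sum_nonneg fun k (_ : k ∈ Finset.range n) => hr k
  have := hU n (ω n)
  unfold Wfun
  linarith

omit [MeasurableSpace Y] in
theorem Tfun_succ (n : ℕ) (ω : ℕ → Y) :
    Tfun D r b M U (n + 1) ω = Tfun D r b M U n ω *
      ((Wfun r M U n ω + b * r n * D.indicator (fun _ => 1) (ω n)) / Wfun r M U n ω) :=
  Finset.prod_range_succ _ _

omit [MeasurableSpace Y] in
theorem Tfun_pos (hr : ∀ n, 0 ≤ r n) (hb : 0 ≤ b) (hW : ∀ n ω, 0 < Wfun r M U n ω)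
    (n : ℕ) (ω : ℕ → Y) : 0 < Tfun D r b M U n ω :=
  Finset.prod_pos fun i _ => div_pos (add_pos_of_pos_of_nonneg (hW i ω)
    (mul_nonneg (mul_nonneg hb (hr i)) (Set.indicator_nonneg (fun _ _ => zero_le_one) _)))
    (hW i ω)

omit [MeasurableSpace Y] in
theorem Wfun_div_Tfun_mul_Tfun_succ (hW : ∀ n ω, 0 < Wfun r M U n ω)
    (hT : ∀ n ω, 0 < Tfun D r b M U n ω) (n : ℕ) (ω : ℕ → Y) :
    Wfun r M U n ω / Tfun D r b M U n ω * Tfun D r b M U (n + 1) ω =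
      Wfun r M U n ω + b * r n * D.indicator (fun _ => 1) (ω n) := by
  have := (hW n ω).ne'
  have := (hT n ω).ne'
  rw [Tfun_succ]
  field_simp

theorem measurable_Wfun {i n : ℕ} (hU : Measurable (U i)) (hi : i ≤ n) :
    Measurable[pastUpTo n] (Wfun r M U i) :=
  ((hU.comp (measurable_pastUpTo_apply hi)).add_const _).add_const _

theorem measurable_Tfun_succ (hD : MeasurableSet D) (hU : ∀ n, Measurable (U n)) (n : ℕ) :
    Measurable[pastUpTo n] (Tfun D r b M U (n + 1)) := by
  refine Finset.measurable_prod _ fun i hi => ?_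
  have hi : i ≤ n := Nat.lt_succ_iff.mp (Finset.mem_range.mp hi)
  have hbonus : Measurable[pastUpTo n]
      (fun ω : ℕ → Y => b * r i * D.indicator (fun _ => 1) (ω i)) :=
    ((measurable_const.indicator hD).comp (measurable_pastUpTo_apply hi)).const_mul _
  exact ((measurable_Wfun (hU i) hi).add hbonus).div (measurable_Wfun (hU i) hi)

theorem lintegral_mul_Wfun_div_Tfun_succ_le {K : Kernel Y Y} [IsMarkovKernel K]
    {μ : Y → Measure (ℕ → Y)} (hμ : IsMarkovChain K μ) (z : Y) (hD : MeasurableSet D)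
    (hr : ∀ n, 0 ≤ r n) (hb : 0 ≤ b) (hM : 0 ≤ M) (hUmeas : ∀ n, Measurable (U n))
    (hUpos : ∀ n z, 0 < U n z)
    (hdrift : ∀ (n : ℕ) (z : Y),
      ∫⁻ w, ENNReal.ofReal (U (n + 1) w) ∂(K z) ≤
        ENNReal.ofReal (U n z - r n + b * r n * D.indicator (fun _ => 1) z))
    (n : ℕ) (g : (ℕ → Y) → ℝ≥0∞) (hg : Measurable[pastUpTo n] g) :
    ∫⁻ ω, g ω * ENNReal.ofReal (Wfun r M U (n + 1) ω / Tfun D r b M U (n + 1) ω) ∂(μ z) ≤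
      ∫⁻ ω, g ω * ENNReal.ofReal (Wfun r M U n ω / Tfun D r b M U n ω) ∂(μ z) := by
  have hW := Wfun_pos hr hM hUpos
  have hT : ∀ n ω, 0 < Tfun D r b M U n ω := Tfun_pos hr hb hW
  set c := (∑ k ∈ Finset.range (n + 1), r k) + M with hc_def
  have hc : 0 ≤ c := add_nonneg (Finset.sum_nonneg fun k _ => hr k) hM
  calc _ = ∫⁻ ω, g ω / ENNReal.ofReal (Tfun D r b M U (n + 1) ω) *
        ENNReal.ofReal (U (n + 1) (ω (n + 1)) + c) ∂(μ z) := by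
        refine lintegral_congr fun ω => ?_
        rw [← ENNReal.div_ofReal_mul_ofReal_mul (hT (n + 1) ω),
          div_mul_cancel₀ _ (hT (n + 1) ω).ne', Wfun, add_assoc]
    _ ≤ ∫⁻ ω, g ω / ENNReal.ofReal (Tfun D r b M U (n + 1) ω) *
        ENNReal.ofReal (U n (ω n) - r n + b * r n * D.indicator (fun _ => 1) (ω n) + c)
          ∂(μ z) :=
        hμ.lintegral_mul_comp_succ_le z n
          (hg.div (measurable_Tfun_succ hD hUmeas n).ennreal_ofReal)
          ((hUmeas (n + 1)).add_const c).ennreal_ofReal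
          fun x => lintegral_ofReal_add_const_le (hUmeas (n + 1)) (hUpos (n + 1)) hc
            (hdrift n x)
    _ = _ := by
        refine lintegral_congr fun ω => ?_
        rw [← ENNReal.div_ofReal_mul_ofReal_mul (g := g ω)
            (x := Wfun r M U n ω / Tfun D r b M U n ω) (hT (n + 1) ω),
          Wfun_div_Tfun_mul_Tfun_succ hW hT, Wfun, hc_def, Finset.sum_range_succ]
        congr 2
        ring

end Drift

/-- under the sequential drift condition
`K U_{n+1} ≤ U_n - r(n) + b·r(n)·1_D`, the process `W_n/T_n` is a supermartingale for
the natural filtration (formulated here by testing against nonnegative functions of the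
past), and in particular `E_z[W_n/T_n] ≤ U_0(z) + M` for every `n`. -/
theorem stmt17 (K : Kernel Y Y) [IsMarkovKernel K] (D : Set Y) (hD : MeasurableSet D)
    (r : ℕ → ℝ) (hr : ∀ n, 0 < r n) (b M : ℝ) (hb : 0 ≤ b) (hM : 0 ≤ M)
    (U : ℕ → Y → ℝ) (hUmeas : ∀ n, Measurable (U n)) (hUpos : ∀ n z, 0 < U n z)
    (hdrift : ∀ (n : ℕ) (z : Y),
      ∫⁻ w, ENNReal.ofReal (U (n + 1) w) ∂(K z) ≤
        ENNReal.ofReal (U n z - r n + b * r n * D.indicator (fun _ => 1) z))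
    (μ : Y → Measure (ℕ → Y)) (hμ : IsMarkovChain K μ) (z : Y) :
    -- supermartingale property of W_n / T_n
    (∀ n : ℕ, ∀ g : (ℕ → Y) → ℝ≥0∞,
      Measurable[MeasurableSpace.comap (fun ω (i : Fin (n + 1)) => ω i) inferInstance] g →
      ∫⁻ ω, g ω * ENNReal.ofReal (Wfun r M U (n + 1) ω / Tfun D r b M U (n + 1) ω) ∂(μ z) ≤
      ∫⁻ ω, g ω * ENNReal.ofReal (Wfun r M U n ω / Tfun D r b M U n ω) ∂(μ z)) ∧
    -- in particular E_z[W_n / T_n] ≤ U_0(z) + M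
    (∀ n : ℕ,
      ∫⁻ ω, ENNReal.ofReal (Wfun r M U n ω / Tfun D r b M U n ω) ∂(μ z) ≤
        ENNReal.ofReal (U 0 z + M)) := by
  have hsuper := lintegral_mul_Wfun_div_Tfun_succ_le hμ z hD (fun n => (hr n).le) hb hM
    hUmeas hUpos hdrift
  refine ⟨hsuper, fun n => ?_⟩
  induction n with
  | zero =>
    simpa [Wfun, Tfun] using
      (hμ.lintegral_comp_zero z ((hUmeas 0).add_const M).ennreal_ofReal).le
  | succ n ih =>
    have hstep := hsuper n (fun _ => 1) measurable_const
    simp only [one_mul] at hstep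
    exact hstep.trans ih
end
end
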